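/- Consider the reduced planar system Σ' = ((C₂Σ² - 1)(3γ + 4(γ-1)C₂Σ - 2) + K(3γ + 2(γ-1)C₂Σ - 2))/(2(γ-1)C₂), K' = 2K(2C₂Σ² + K - 1), with 1 < γ < 2 and C₂ > 0. The point (Σ,K) = ((3γ-2)/(4C₂(1-γ))·(-1)·(-1), 0) — i.e. Σ = -(2-3γ)/(4C₂(1-γ)), K = 0 — is an equilibrium whose Jacobian has eigenvalues ((2-3γ)² - 16(γ-1)²C₂)/(8(γ-1)²C₂) and ((2-3γ)² - 8(γ-1)²C₂)/(4(γ-1)²C₂); in particular both eigenvalues are negative (local attractor) if and only if C₂ > (2-3γ)²/(8(γ-1)²). -/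

import Mathlib

/-!
At `P₁₃` we have `K = 0`, so `∂K'/∂Σ = 8 C₂ Σ K` vanishes and the Jacobian is upper triangular;
its eigenvalues are the diagonal entries `∂Σ'/∂Σ = 2 (C₂ Σ² - 1)` (the other summand vanishes since
`4 (γ - 1) C₂ Σ = 2 - 3γ` there) and `∂K'/∂K = 4 C₂ Σ² - 2`. As `C₂ Σ² > 0`, the second is the
larger one, so both are negative iff the second is, i.e. iff `(2 - 3γ)² < 8 (γ - 1)² C₂`.
-/

noncomputable section

/-- Reduced planar system on the invariant set `A = v = 0`:
components `(Σ', K')` as functions of `(Σ, K)`. -/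
def Fred (γ C₂ : ℝ) : ℝ × ℝ → ℝ × ℝ := fun p =>
  (((C₂ * p.1 ^ 2 - 1) * (3 * γ + 4 * (γ - 1) * C₂ * p.1 - 2) +
      p.2 * (3 * γ + 2 * (γ - 1) * C₂ * p.1 - 2)) / (2 * (γ - 1) * C₂),
    2 * p.2 * (2 * C₂ * p.1 ^ 2 + p.2 - 1))

open ContinuousLinearMap Module.End

def matrixCLM₂ (a b c d : ℝ) : ℝ × ℝ →L[ℝ] ℝ × ℝ :=
  (a • fst ℝ ℝ ℝ + b • snd ℝ ℝ ℝ).prod (c • fst ℝ ℝ ℝ + d • snd ℝ ℝ ℝ)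

@[simp]
theorem matrixCLM₂_apply (a b c d : ℝ) (v : ℝ × ℝ) :
    matrixCLM₂ a b c d v = (a * v.1 + b * v.2, c * v.1 + d * v.2) := rfl

theorem matrixCLM₂_hasEigenvalue_topLeft (a b d : ℝ) :
    HasEigenvalue (matrixCLM₂ a b 0 d).toLinearMap a :=
  hasEigenvalue_of_hasEigenvector (x := (1, 0))
    ⟨mem_eigenspace_iff.mpr (by simp), by simp⟩

theorem matrixCLM₂_hasEigenvalue_bottomRight (a b d : ℝ) :
    HasEigenvalue (matrixCLM₂ a b 0 d).toLinearMap d := by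
  by_cases hb : b = 0
  · subst hb
    exact hasEigenvalue_of_hasEigenvector (x := (0, 1))
      ⟨mem_eigenspace_iff.mpr (by simp), by simp⟩
  · refine hasEigenvalue_of_hasEigenvector (x := (b, d - a))
      ⟨mem_eigenspace_iff.mpr ?_, by simp [hb]⟩
    simp only [coe_coe, matrixCLM₂_apply, Prod.smul_mk, smul_eq_mul]
    congr 1 <;> ring

theorem hasFDerivAt_Fred (γ C₂ : ℝ) (p : ℝ × ℝ) :
    HasFDerivAt (Fred γ C₂)
      (matrixCLM₂
        ((2 * C₂ * p.1 * (3 * γ + 4 * (γ - 1) * C₂ * p.1 - 2) +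
            4 * (γ - 1) * C₂ * (C₂ * p.1 ^ 2 - 1) + 2 * (γ - 1) * C₂ * p.2) /
          (2 * (γ - 1) * C₂))
        ((3 * γ + 2 * (γ - 1) * C₂ * p.1 - 2) / (2 * (γ - 1) * C₂))
        (8 * C₂ * p.1 * p.2)
        (4 * C₂ * p.1 ^ 2 + 4 * p.2 - 2)) p := by
  have h₁ : HasFDerivAt (fun q : ℝ × ℝ => q.1) (fst ℝ ℝ ℝ) p := hasFDerivAt_fst
  have h₂ : HasFDerivAt (fun q : ℝ × ℝ => q.2) (snd ℝ ℝ ℝ) p := hasFDerivAt_snd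
  have hsq : HasFDerivAt (fun q : ℝ × ℝ => q.1 ^ 2) ((2 * p.1) • fst ℝ ℝ ℝ) p := by
    simpa using h₁.pow 2
  refine HasFDerivAt.prodMk ?_ ?_
  · have := ((((hsq.const_mul C₂).sub_const 1).fun_mul
      (((h₁.const_mul (4 * (γ - 1) * C₂)).const_add (3 * γ)).sub_const 2)).fun_add
      (h₂.fun_mul (((h₁.const_mul (2 * (γ - 1) * C₂)).const_add (3 * γ)).sub_const 2))).mul_const
      (2 * (γ - 1) * C₂)⁻¹
    simp only [div_eq_mul_inv]
    refine this.congr_fderiv (ContinuousLinearMap.ext fun v => ?_)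
    simp only [mul_inv_rev, smul_add, add_apply, smul_apply, coe_fst', smul_eq_mul, coe_snd']
    ring
  · have := (h₂.const_mul 2).fun_mul (((hsq.const_mul (2 * C₂)).fun_add h₂).sub_const 1)
    refine this.congr_fderiv (ContinuousLinearMap.ext fun v => ?_)
    simp only [smul_add, add_apply, smul_apply, coe_fst', smul_eq_mul, coe_snd']
    ring

def P₁₃ (γ C₂ : ℝ) : ℝ × ℝ := (-(2 - 3 * γ) / (4 * C₂ * (1 - γ)), 0)

theorem Fred_P₁₃ {γ C₂ : ℝ} (hγ : γ ≠ 1) (hC : C₂ ≠ 0) : Fred γ C₂ (P₁₃ γ C₂) = 0 := by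
  have h₁γ : 1 - γ ≠ 0 := sub_ne_zero.mpr hγ.symm
  have hγ₁ : γ - 1 ≠ 0 := sub_ne_zero.mpr hγ
  simp only [Fred, P₁₃, Prod.mk_eq_zero]
  constructor
  · field_simp
    ring
  · ring

theorem fderiv_Fred_P₁₃ {γ C₂ : ℝ} (hγ : γ ≠ 1) (hC : C₂ ≠ 0) :
    fderiv ℝ (Fred γ C₂) (P₁₃ γ C₂) =
      matrixCLM₂ (((2 - 3 * γ) ^ 2 - 16 * (γ - 1) ^ 2 * C₂) / (8 * (γ - 1) ^ 2 * C₂))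
        ((3 * γ - 2) / (4 * (γ - 1) * C₂)) 0
        (((2 - 3 * γ) ^ 2 - 8 * (γ - 1) ^ 2 * C₂) / (4 * (γ - 1) ^ 2 * C₂)) := by
  have h₁γ : 1 - γ ≠ 0 := sub_ne_zero.mpr hγ.symm
  have hγ₁ : γ - 1 ≠ 0 := sub_ne_zero.mpr hγ
  rw [(hasFDerivAt_Fred γ C₂ _).fderiv]
  simp only [P₁₃]
  congr 1 <;> field_simp <;> ring

theorem div_neg_and_div_neg_iff {s k C : ℝ} (hk : 0 < k) (hC : 0 < C) :
    ((s - 16 * k * C) / (8 * k * C) < 0 ∧ (s - 8 * k * C) / (4 * k * C) < 0) ↔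
      s / (8 * k) < C := by
  have hkC : 0 < k * C := mul_pos hk hC
  rw [div_lt_iff₀ (by positivity), div_lt_iff₀ (by positivity), div_lt_iff₀ (by positivity),
    zero_mul, zero_mul]
  constructor
  · rintro ⟨-, h⟩
    linarith
  · intro h
    constructor <;> linarith

theorem P13_eigenvalues_general (γ C₂ : ℝ) (hγ₁ : 1 < γ) (hC : 0 < C₂) :
    Fred γ C₂ (-(2 - 3 * γ) / (4 * C₂ * (1 - γ)), 0) = 0 ∧
    Module.End.HasEigenvalue
      ((fderiv ℝ (Fred γ C₂) (-(2 - 3 * γ) / (4 * C₂ * (1 - γ)), 0)).toLinearMap)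
      (((2 - 3 * γ) ^ 2 - 16 * (γ - 1) ^ 2 * C₂) / (8 * (γ - 1) ^ 2 * C₂)) ∧
    Module.End.HasEigenvalue
      ((fderiv ℝ (Fred γ C₂) (-(2 - 3 * γ) / (4 * C₂ * (1 - γ)), 0)).toLinearMap)
      (((2 - 3 * γ) ^ 2 - 8 * (γ - 1) ^ 2 * C₂) / (4 * (γ - 1) ^ 2 * C₂)) ∧
    ((((2 - 3 * γ) ^ 2 - 16 * (γ - 1) ^ 2 * C₂) / (8 * (γ - 1) ^ 2 * C₂) < 0 ∧
      ((2 - 3 * γ) ^ 2 - 8 * (γ - 1) ^ 2 * C₂) / (4 * (γ - 1) ^ 2 * C₂) < 0) ↔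
      (2 - 3 * γ) ^ 2 / (8 * (γ - 1) ^ 2) < C₂) := by
  have hγ : γ ≠ 1 := hγ₁.ne'
  have hJ := fderiv_Fred_P₁₃ hγ hC.ne'
  refine ⟨Fred_P₁₃ hγ hC.ne', ?_, ?_, ?_⟩
  · exact hJ ▸ matrixCLM₂_hasEigenvalue_topLeft _ _ _
  · exact hJ ▸ matrixCLM₂_hasEigenvalue_bottomRight _ _ _
  · exact div_neg_and_div_neg_iff (pow_pos (sub_pos.mpr hγ₁) 2) hC

/-- The equilibrium `P₁₃ : (Σ, K) = (-(2-3γ)/(4C₂(1-γ)), 0)` of the reduced system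
has Jacobian eigenvalues `((2-3γ)² - 16(γ-1)²C₂)/(8(γ-1)²C₂)` and
`((2-3γ)² - 8(γ-1)²C₂)/(4(γ-1)²C₂)`, which are both negative (local attractor)
iff `C₂ > (2-3γ)²/(8(γ-1)²)`. -/
theorem P13_eigenvalues (γ C₂ : ℝ) (hγ₁ : 1 < γ) (hγ₂ : γ < 2) (hC : 0 < C₂) :
    Fred γ C₂ (-(2 - 3 * γ) / (4 * C₂ * (1 - γ)), 0) = 0 ∧
    Module.End.HasEigenvalue
      ((fderiv ℝ (Fred γ C₂) (-(2 - 3 * γ) / (4 * C₂ * (1 - γ)), 0)).toLinearMap)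
      (((2 - 3 * γ) ^ 2 - 16 * (γ - 1) ^ 2 * C₂) / (8 * (γ - 1) ^ 2 * C₂)) ∧
    Module.End.HasEigenvalue
      ((fderiv ℝ (Fred γ C₂) (-(2 - 3 * γ) / (4 * C₂ * (1 - γ)), 0)).toLinearMap)
      (((2 - 3 * γ) ^ 2 - 8 * (γ - 1) ^ 2 * C₂) / (4 * (γ - 1) ^ 2 * C₂)) ∧
    ((((2 - 3 * γ) ^ 2 - 16 * (γ - 1) ^ 2 * C₂) / (8 * (γ - 1) ^ 2 * C₂) < 0 ∧
      ((2 - 3 * γ) ^ 2 - 8 * (γ - 1) ^ 2 * C₂) / (4 * (γ - 1) ^ 2 * C₂) < 0) ↔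
      (2 - 3 * γ) ^ 2 / (8 * (γ - 1) ^ 2) < C₂) :=
  P13_eigenvalues_general γ C₂ hγ₁ hC
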